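/- arXiv:1808.05442 — 2 statements merged into one kernel-verified Lean document; each statement's English description precedes it below -/
import Mathlib

section
/- Suppose in addition P(lim_{n→∞} T_n = ∞) = P(lim_{n→∞} S_n = ∞) = 1. Then for every n ≥ 1, α_n < ∞ and β_n < ∞ almost surely, so ξ̃_{α_n} = ξ_{α_n} and ξ̃_{β_n} = ξ_{β_n} almost surely, and the family {ξ_{α_n} : n ≥ 1} ∪ {ξ_{β_n} : n ≥ 1} is i.i.d. with each member uniform on {1,−1}. -/
open MeasureTheory ProbabilityTheory Filter Set

noncomputable section

variable {Ω : Type*}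

/-- `Q n = 1` if the `n`-th moves agree, `0` if they are opposite. -/
def Qproc (ξ η : ℕ → Ω → ℝ) (n : ℕ) (ω : Ω) : ℕ :=
  if ξ n ω = η n ω then 1 else 0

/-- `T n = ∑_{k=1}^n Q k`, the number of common movements up to step `n`. -/
def Tproc (ξ η : ℕ → Ω → ℝ) (n : ℕ) (ω : Ω) : ℕ :=
  ∑ k ∈ Finset.Icc 1 n, Qproc ξ η k ω

/-- `S n = n - T n`, the number of counter movements up to step `n`. -/
def Sproc (ξ η : ℕ → Ω → ℝ) (n : ℕ) (ω : Ω) : ℕ :=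
  n - Tproc ξ η n ω

/-- `α n = inf {k ≥ 1 : T k = n}`, with `inf ∅ = ⊤`, valued in `ℕ∞`. -/
def alphaProc (ξ η : ℕ → Ω → ℝ) (n : ℕ) (ω : Ω) : ℕ∞ :=
  ⨅ (k : ℕ) (_ : 1 ≤ k ∧ Tproc ξ η k ω = n), (k : ℕ∞)

/-- `β n = inf {k ≥ 1 : S k = n}`, with `inf ∅ = ⊤`, valued in `ℕ∞`. -/
def betaProc (ξ η : ℕ → Ω → ℝ) (n : ℕ) (ω : Ω) : ℕ∞ :=
  ⨅ (k : ℕ) (_ : 1 ≤ k ∧ Sproc ξ η k ω = n), (k : ℕ∞)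

/-- `ξ̃_{α n}`: equal to `ξ_i` on `{α n = i}` (`i < ∞`) and to `ζ n` on `{α n = ∞}`. -/
def xiAlpha (ξ η ζ : ℕ → Ω → ℝ) (n : ℕ) (ω : Ω) : ℝ :=
  if alphaProc ξ η n ω = ⊤ then ζ n ω else ξ (alphaProc ξ η n ω).toNat ω

/-- `ξ̃_{β m}`: equal to `ξ_i` on `{β m = i}` (`i < ∞`) and to `ψ m` on `{β m = ∞}`. -/
def xiBeta (ξ η ψ : ℕ → Ω → ℝ) (m : ℕ) (ω : Ω) : ℝ :=
  if betaProc ξ η m ω = ⊤ then ψ m ω else ξ (betaProc ξ η m ω).toNat ω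

/-- The common-movement walk `X n = ∑_{i=1}^n ξ̃_{α i}`. -/
def Xproc (ξ η ζ : ℕ → Ω → ℝ) (n : ℕ) (ω : Ω) : ℝ :=
  ∑ i ∈ Finset.Icc 1 n, xiAlpha ξ η ζ i ω

/-- The counter-movement walk `Y n = ∑_{i=1}^n ξ̃_{β i}`. -/
def Yproc (ξ η ψ : ℕ → Ω → ℝ) (n : ℕ) (ω : Ω) : ℝ :=
  ∑ i ∈ Finset.Icc 1 n, xiBeta ξ η ψ i ω


/-!
Fix targets `x i` for `ξ_{α (nn i)}` and `y j` for `ξ_{β (mm j)}`, and let `c k` be the target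
attached to step `k`: `x i` if `k = α (nn i)`, `y j` if `k = β (mm j)`, and `0` otherwise. Since
`1[ξ_k = η_k] = (1 + ξ_k η_k) / 2`, the increment `ξ_k c_k` is a combination of `ξ_k` and `η_k`
with `F (k - 1)`-measurable coefficients, and both have conditional mean zero; hence the product
`Z N = ∏_{k ≤ N} (1 + ξ_k c_k)` has expectation `1`. Grouping its factors by the hitting times,
`Z N` is a product over those `α (nn i)`, `β (mm j)` that are `≤ N`, each factor being `2` or `0`
according as the target is hit. As `T N, S N → ∞` almost surely, `Z N` converges to `2 ^ (k + l)`
times the indicator of the event, and dominated convergence gives the probability `2⁻¹ ^ (k + l)`.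
-/

/-- `alphaProc ξ η n ω` and `betaProc ξ η n ω` are, by definition, `firstHit` of `Tproc ξ η · ω`
and `Sproc ξ η · ω`. -/
def firstHit (f : ℕ → ℕ) (n : ℕ) : ℕ∞ :=
  ⨅ (k : ℕ) (_ : 1 ≤ k ∧ f k = n), (k : ℕ∞)

section Counting

variable {f : ℕ → ℕ} {q : ℕ → Prop} [DecidablePred q]

theorem monotone_of_succ_eq_add_ite (hq : ∀ k, f (k + 1) = f k + if q (k + 1) then 1 else 0) :
    Monotone f :=
  monotone_nat_of_le_succ fun k => by rw [hq k]; exact Nat.le_add_right _ _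

theorem firstHit_succ (hq : ∀ k, f (k + 1) = f k + if q (k + 1) then 1 else 0) {N : ℕ}
    (hN : q (N + 1)) : firstHit f (f N + 1) = (N + 1 : ℕ) := by
  have hfN : f (N + 1) = f N + 1 := by simp [hq N, hN]
  refine le_antisymm (iInf₂_le (N + 1) ⟨N.succ_pos, hfN⟩) (le_iInf₂ fun k hk => ?_)
  by_contra! hlt
  have := monotone_of_succ_eq_add_ite hq (Nat.le_of_lt_succ (by exact_mod_cast hlt) : k ≤ N)
  omega

theorem firstHit_ne_top (h0 : f 0 = 0) (hq : ∀ k, f (k + 1) = f k + if q (k + 1) then 1 else 0)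
    {n N : ℕ} (hn : 1 ≤ n) (hN : n ≤ f N) : firstHit f n ≠ ⊤ := by
  induction N with
  | zero => omega
  | succ N ih =>
    by_cases hle : n ≤ f N
    · exact ih hle
    · by_cases hqN : q (N + 1)
      · rw [show n = f N + 1 by simp [hq N, hqN] at hN; omega, firstHit_succ hq hqN]
        exact ENat.natCast_ne_top _
      · simp [hq N, hqN] at hN; omega

/-- Reindexing the up-steps of a counting process by their heights: the `n`-th up-step happens at
`firstHit f n`. -/
theorem prod_Icc_firstHit {M : Type*} [CommMonoid M] (h0 : f 0 = 0)
    (hq : ∀ k, f (k + 1) = f k + if q (k + 1) then 1 else 0) (g : ℕ → ℕ → M) (N : ℕ) :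
    ∏ k ∈ Finset.Icc 1 N, (if q k then g k (f k) else 1) =
      ∏ n ∈ Finset.Icc 1 (f N), g (firstHit f n).toNat n := by
  induction N with
  | zero => simp [h0]
  | succ N ih =>
    rw [Finset.prod_Icc_succ_top (Nat.le_add_left 1 N), ih]
    by_cases hqN : q (N + 1)
    · rw [if_pos hqN, hq N, if_pos hqN, Finset.prod_Icc_succ_top (Nat.le_add_left 1 _),
        firstHit_succ hq hqN, ENat.toNat_natCast]
    · rw [if_neg hqN, hq N, if_neg hqN, mul_one, add_zero]

end Counting

section Walks

variable (ξ η : ℕ → Ω → ℝ) (ω : Ω)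

theorem Tproc_succ (k : ℕ) :
    Tproc ξ η (k + 1) ω = Tproc ξ η k ω + if ξ (k + 1) ω = η (k + 1) ω then 1 else 0 :=
  Finset.sum_Icc_succ_top (Nat.le_add_left 1 k) _

theorem Tproc_le (k : ℕ) : Tproc ξ η k ω ≤ k := by
  induction k with
  | zero => simp [Tproc]
  | succ k ih => rw [Tproc_succ]; split_ifs <;> omega

theorem Sproc_succ (k : ℕ) :
    Sproc ξ η (k + 1) ω = Sproc ξ η k ω + if ¬ξ (k + 1) ω = η (k + 1) ω then 1 else 0 := by
  have := Tproc_le ξ η ω k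
  simp only [Sproc, Tproc_succ]
  split_ifs <;> omega

end Walks

theorem alphaProc_ne_top {ξ η : ℕ → Ω → ℝ} {ω : Ω}
    (hT : Tendsto (fun N => Tproc ξ η N ω) atTop atTop) {n : ℕ} (hn : 1 ≤ n) :
    alphaProc ξ η n ω ≠ ⊤ :=
  have ⟨_, hN⟩ := (hT.eventually_ge_atTop n).exists
  firstHit_ne_top (q := fun k => ξ k ω = η k ω) (by simp [Tproc]) (Tproc_succ ξ η ω) hn hN

theorem betaProc_ne_top {ξ η : ℕ → Ω → ℝ} {ω : Ω}
    (hS : Tendsto (fun N => Sproc ξ η N ω) atTop atTop) {n : ℕ} (hn : 1 ≤ n) :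
    betaProc ξ η n ω ≠ ⊤ :=
  have ⟨_, hN⟩ := (hS.eventually_ge_atTop n).exists
  firstHit_ne_top (q := fun k => ¬ξ k ω = η k ω) (by simp [Sproc]) (Sproc_succ ξ η ω) hn hN

theorem ae_tendsto_of_measure_eq_one {mΩ : MeasurableSpace Ω} {P : Measure Ω}
    [IsProbabilityMeasure P] {f : ℕ → Ω → ℕ} (hf : ∀ N, Measurable (f N))
    (h : P {ω | Tendsto (fun N => f N ω) atTop atTop} = 1) :
    ∀ᵐ ω ∂P, Tendsto (fun N => f N ω) atTop atTop :=
  (ae_iff_measure_eq (measurableSet_tendsto _ hf).nullMeasurableSet).2 (by rw [h, measure_univ])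

section Adapted

variable {mΩ : MeasurableSpace Ω} {F : Filtration ℕ mΩ} {ξ η : ℕ → Ω → ℝ}

theorem measurable_Tproc (hξ : ∀ n, 1 ≤ n → Measurable[F n] (ξ n))
    (hη : ∀ n, 1 ≤ n → Measurable[F n] (η n)) (N : ℕ) : Measurable[F N] (Tproc ξ η N) := by
  refine Finset.measurable_sum _ fun k hk => ?_
  obtain ⟨hk1, hkN⟩ := Finset.mem_Icc.mp hk
  exact (Measurable.ite (measurableSet_eq_fun (hξ k hk1) (hη k hk1)) measurable_const
    measurable_const).mono (F.mono hkN) le_rfl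

theorem measurable_Sproc (hξ : ∀ n, 1 ≤ n → Measurable[F n] (ξ n))
    (hη : ∀ n, 1 ≤ n → Measurable[F n] (η n)) (N : ℕ) : Measurable[F N] (Sproc ξ η N) :=
  measurable_const.sub (measurable_Tproc hξ hη N)

end Adapted

section CondExp

variable {m m0 : MeasurableSpace Ω} {μ : Measure[m0] Ω}

theorem condExp_eq_zero_of_indicator_half [IsFiniteMeasure μ] {X : Ω → ℝ} (hX : Measurable X)
    (hXv : ∀ ω, X ω = 1 ∨ X ω = -1)
    (h1 : μ[{ω | X ω = 1}.indicator (fun _ => (1 : ℝ)) | m] =ᵐ[μ] fun _ => 1 / 2)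
    (h2 : μ[{ω | X ω = -1}.indicator (fun _ => (1 : ℝ)) | m] =ᵐ[μ] fun _ => 1 / 2) :
    μ[X | m] =ᵐ[μ] 0 := by
  have hX_eq : X = {ω | X ω = 1}.indicator (fun _ => (1 : ℝ)) -
      {ω | X ω = -1}.indicator (fun _ => (1 : ℝ)) := by
    ext ω
    rcases hXv ω with h | h <;> norm_num [indicator, h]
  have hint : ∀ r : ℝ, Integrable ({ω | X ω = r}.indicator (fun _ => (1 : ℝ))) μ :=
    fun r => (integrable_const 1).indicator (hX (measurableSet_singleton r))
  rw [hX_eq]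
  filter_upwards [condExp_sub (hint 1) (hint (-1)) m, h1, h2] with ω hsub hω1 hω2
  simp [hsub, hω1, hω2]

theorem integral_mul_eq_zero_of_condExp_eq_zero (hm : m ≤ m0) [SigmaFinite (μ.trim hm)]
    {V X : Ω → ℝ} (hV : StronglyMeasurable[m] V) (hVX : Integrable (V * X) μ)
    (hX : Integrable X μ) (h : μ[X | m] =ᵐ[μ] 0) : ∫ ω, V ω * X ω ∂μ = 0 :=
  calc ∫ ω, V ω * X ω ∂μ = ∫ ω, (μ[V * X | m]) ω ∂μ := (integral_condExp hm).symm
    _ = ∫ ω, (V * μ[X | m]) ω ∂μ :=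
      integral_congr_ae (condExp_mul_of_stronglyMeasurable_left hV hVX hX)
    _ = 0 := by rw [integral_congr_ae (EventuallyEq.rfl.mul h)]; simp

theorem integral_add_mul_eq_of_condExp_eq_zero [IsFiniteMeasure μ] (hm : m ≤ m0)
    {Z V W X Y : Ω → ℝ} {C : ℝ} (hZ : Integrable Z μ) (hV : Measurable[m] V)
    (hW : Measurable[m] W) (hV_le : ∀ ω, |V ω| ≤ C) (hW_le : ∀ ω, |W ω| ≤ C)
    (hX : Integrable X μ) (hY : Integrable Y μ) (hX0 : μ[X | m] =ᵐ[μ] 0)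
    (hY0 : μ[Y | m] =ᵐ[μ] 0) :
    ∫ ω, Z ω + V ω * X ω + W ω * Y ω ∂μ = ∫ ω, Z ω ∂μ := by
  have hVX := hX.bdd_mul (hV.mono hm le_rfl).aestronglyMeasurable (ae_of_all _ hV_le)
  have hWY := hY.bdd_mul (hW.mono hm le_rfl).aestronglyMeasurable (ae_of_all _ hW_le)
  rw [integral_add (f := fun ω => Z ω + V ω * X ω) (hZ.add hVX) hWY, integral_add hZ hVX,
    integral_mul_eq_zero_of_condExp_eq_zero hm hV.stronglyMeasurable hVX hX hX0,
    integral_mul_eq_zero_of_condExp_eq_zero hm hW.stronglyMeasurable hWY hY hY0, add_zero, add_zero]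

end CondExp

def stepTarget (ξ η : ℕ → Ω → ℝ) (a b : ℕ → ℝ) (k : ℕ) (ω : Ω) : ℝ :=
  if ξ k ω = η k ω then a (Tproc ξ η k ω) else b (Sproc ξ η k ω)

def densityProc (ξ η : ℕ → Ω → ℝ) (a b : ℕ → ℝ) (N : ℕ) (ω : Ω) : ℝ :=
  ∏ k ∈ Finset.Icc 1 N, (1 + ξ k ω * stepTarget ξ η a b k ω)

section Density

variable {ξ η : ℕ → Ω → ℝ} {a b : ℕ → ℝ}

/-- From `1[ξ = η] = (1 + ξ η) / 2` for signs: the increment is a combination of `ξ (k + 1)` and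
`η (k + 1)` with coefficients known at time `k`. -/
theorem mul_stepTarget_succ {ω : Ω} {k : ℕ} (hξ : ξ (k + 1) ω = 1 ∨ ξ (k + 1) ω = -1)
    (hη : η (k + 1) ω = 1 ∨ η (k + 1) ω = -1) :
    ξ (k + 1) ω * stepTarget ξ η a b (k + 1) ω =
      (a (Tproc ξ η k ω + 1) + b (Sproc ξ η k ω + 1)) / 2 * ξ (k + 1) ω +
      (a (Tproc ξ η k ω + 1) - b (Sproc ξ η k ω + 1)) / 2 * η (k + 1) ω := by
  rcases hξ with hx | hx <;> rcases hη with hy | hy <;>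
    simp only [stepTarget, Tproc_succ, Sproc_succ, hx, hy] <;> norm_num <;> ring

theorem abs_densityProc_le (hξv : ∀ n ω, ξ n ω = 1 ∨ ξ n ω = -1) (ha : ∀ n, |a n| ≤ 1)
    (hb : ∀ n, |b n| ≤ 1) (N : ℕ) (ω : Ω) : |densityProc ξ η a b N ω| ≤ 2 ^ N := by
  have hfactor : ∀ k, |1 + ξ k ω * stepTarget ξ η a b k ω| ≤ 2 := fun k => by
    have hc : |stepTarget ξ η a b k ω| ≤ 1 := by unfold stepTarget; split_ifs <;> simp [ha, hb]
    have hx : |ξ k ω| = 1 := by rcases hξv k ω with h | h <;> simp [h]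
    calc |1 + ξ k ω * stepTarget ξ η a b k ω| ≤ 1 + |ξ k ω| * |stepTarget ξ η a b k ω| := by
          simpa [abs_mul] using abs_add_le 1 (ξ k ω * stepTarget ξ η a b k ω)
      _ ≤ 2 := by rw [hx]; linarith
  calc |densityProc ξ η a b N ω| = ∏ k ∈ Finset.Icc 1 N, |1 + ξ k ω * stepTarget ξ η a b k ω| :=
        Finset.abs_prod _ _
    _ ≤ ∏ _k ∈ Finset.Icc 1 N, (2 : ℝ) :=
      Finset.prod_le_prod (fun _ _ => abs_nonneg _) fun k _ => hfactor k
    _ = 2 ^ N := by simp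

variable {mΩ : MeasurableSpace Ω} {F : Filtration ℕ mΩ}

theorem measurable_densityProc (hξ : ∀ n, 1 ≤ n → Measurable[F n] (ξ n))
    (hη : ∀ n, 1 ≤ n → Measurable[F n] (η n)) (N : ℕ) :
    Measurable[F N] (densityProc ξ η a b N) := by
  refine Finset.measurable_prod _ fun k hk => ?_
  obtain ⟨hk1, hkN⟩ := Finset.mem_Icc.mp hk
  have hc : Measurable[F k] (stepTarget ξ η a b k) :=
    Measurable.ite (measurableSet_eq_fun (hξ k hk1) (hη k hk1))
      (measurable_from_nat.comp (measurable_Tproc hξ hη k))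
      (measurable_from_nat.comp (measurable_Sproc hξ hη k))
  exact (measurable_const.add ((hξ k hk1).mul hc)).mono (F.mono hkN) le_rfl

end Density

section Martingale

variable {mΩ : MeasurableSpace Ω} {P : Measure Ω} [IsProbabilityMeasure P]
  {F : Filtration ℕ mΩ} {ξ η : ℕ → Ω → ℝ} {a b : ℕ → ℝ}

theorem integrable_of_abs_le {f : Ω → ℝ} (hf : Measurable f) {C : ℝ} (hC : ∀ ω, |f ω| ≤ C) :
    Integrable f P :=
  .of_bound hf.aestronglyMeasurable C (ae_of_all _ hC)

theorem integrable_of_sign {X : Ω → ℝ} (hX : Measurable X) (hXv : ∀ ω, X ω = 1 ∨ X ω = -1) :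
    Integrable X P :=
  integrable_of_abs_le hX (C := 1) fun ω => by rcases hXv ω with h | h <;> simp [h]

theorem integral_densityProc (hξ : ∀ n, 1 ≤ n → Measurable[F n] (ξ n))
    (hη : ∀ n, 1 ≤ n → Measurable[F n] (η n)) (hξv : ∀ n ω, ξ n ω = 1 ∨ ξ n ω = -1)
    (hηv : ∀ n ω, η n ω = 1 ∨ η n ω = -1) (hξ0 : ∀ n, P[ξ (n + 1) | F n] =ᵐ[P] 0)
    (hη0 : ∀ n, P[η (n + 1) | F n] =ᵐ[P] 0) (ha : ∀ n, |a n| ≤ 1) (hb : ∀ n, |b n| ≤ 1)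
    (N : ℕ) : ∫ ω, densityProc ξ η a b N ω ∂P = 1 := by
  induction N with
  | zero => simp [densityProc]
  | succ N ih =>
    set Z := densityProc ξ η a b N
    have hZ : Measurable[F N] Z := measurable_densityProc hξ hη N
    have hZ_le : ∀ ω, |Z ω| ≤ 2 ^ N := abs_densityProc_le hξv ha hb N
    have hT : Measurable[F N] fun ω => a (Tproc ξ η N ω + 1) :=
      measurable_from_nat.comp ((measurable_Tproc hξ hη N).add_const 1)
    have hS : Measurable[F N] fun ω => b (Sproc ξ η N ω + 1) :=
      measurable_from_nat.comp ((measurable_Sproc hξ hη N).add_const 1)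
    have hcoef_le : ∀ (s t : ℕ) ω, |Z ω * ((a s + b t) / 2)| ≤ 2 ^ N ∧
        |Z ω * ((a s - b t) / 2)| ≤ 2 ^ N := fun s t ω => by
      obtain ⟨h1, h2⟩ := abs_le.mp (ha s)
      obtain ⟨h3, h4⟩ := abs_le.mp (hb t)
      constructor <;> refine (abs_mul _ _).trans_le
        ((mul_le_of_le_one_right (abs_nonneg _) ?_).trans (hZ_le ω)) <;>
        rw [abs_le] <;> constructor <;> linarith
    have hstep : densityProc ξ η a b (N + 1) = fun ω =>
        Z ω + Z ω * ((a (Tproc ξ η N ω + 1) + b (Sproc ξ η N ω + 1)) / 2) * ξ (N + 1) ω +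
          Z ω * ((a (Tproc ξ η N ω + 1) - b (Sproc ξ η N ω + 1)) / 2) * η (N + 1) ω := by
      ext ω
      rw [densityProc, Finset.prod_Icc_succ_top (Nat.le_add_left 1 N),
        mul_stepTarget_succ (hξv _ ω) (hηv _ ω)]
      simp only [Z, densityProc]
      ring
    rw [hstep]
    exact (integral_add_mul_eq_of_condExp_eq_zero (F.le N)
      (integrable_of_abs_le (hZ.mono (F.le N) le_rfl) hZ_le)
      (hZ.mul ((hT.add hS).div_const 2)) (hZ.mul ((hT.sub hS).div_const 2))
      (fun ω => (hcoef_le _ _ ω).1) (fun ω => (hcoef_le _ _ ω).2)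
      (integrable_of_sign ((hξ _ N.succ_pos).mono (F.le _) le_rfl) (hξv (N + 1)))
      (integrable_of_sign ((hη _ N.succ_pos).mono (F.le _) le_rfl) (hηv (N + 1)))
      (hξ0 N) (hη0 N)).trans ih

end Martingale

theorem densityProc_eq_prod_firstHit (ξ η : ℕ → Ω → ℝ) (a b : ℕ → ℝ) (N : ℕ) (ω : Ω) :
    densityProc ξ η a b N ω =
      (∏ n ∈ Finset.Icc 1 (Tproc ξ η N ω), (1 + ξ (alphaProc ξ η n ω).toNat ω * a n)) *
      ∏ n ∈ Finset.Icc 1 (Sproc ξ η N ω), (1 + ξ (betaProc ξ η n ω).toNat ω * b n) := by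
  have hfactor : ∀ k, 1 + ξ k ω * stepTarget ξ η a b k ω =
      (if ξ k ω = η k ω then 1 + ξ k ω * a (Tproc ξ η k ω) else 1) *
      (if ¬ξ k ω = η k ω then 1 + ξ k ω * b (Sproc ξ η k ω) else 1) := fun k => by
    unfold stepTarget; split_ifs <;> ring
  have hT := prod_Icc_firstHit (f := fun k => Tproc ξ η k ω) (q := fun k => ξ k ω = η k ω)
    (by simp [Tproc])
    (Tproc_succ ξ η ω) (fun k t => 1 + ξ k ω * a t) N
  have hS := prod_Icc_firstHit (f := fun k => Sproc ξ η k ω) (q := fun k => ¬ξ k ω = η k ω)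
    (by simp [Sproc])
    (Sproc_succ ξ η ω) (fun k t => 1 + ξ k ω * b t) N
  rw [densityProc, Finset.prod_congr rfl fun k _ => hfactor k, Finset.prod_mul_distrib, hT, hS]
  rfl

theorem prod_Icc_extend {ι : Type*} [Fintype ι] {nn : ι → ℕ} (hnn : ∀ i, 1 ≤ nn i)
    (hinj : Function.Injective nn) (x : ι → ℝ) (u : ℕ → ℝ) (M : ℕ) :
    ∏ n ∈ Finset.Icc 1 M, (1 + u n * Function.extend nn x 0 n) =
      ∏ i, if nn i ≤ M then 1 + u (nn i) * x i else 1 := by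
  classical
  set s := Finset.univ.filter fun i => nn i ≤ M
  have hsub : s.image nn ⊆ Finset.Icc 1 M := fun n hn => by
    obtain ⟨i, hi, rfl⟩ := Finset.mem_image.mp hn
    exact Finset.mem_Icc.mpr ⟨hnn i, (Finset.mem_filter.mp hi).2⟩
  have hone : ∀ n ∈ Finset.Icc 1 M, n ∉ s.image nn → 1 + u n * Function.extend nn x 0 n = 1 :=
    fun n hn hns => by
      have hout : ¬∃ i, nn i = n := fun ⟨i, hi⟩ => hns (Finset.mem_image.mpr
        ⟨i, Finset.mem_filter.mpr ⟨Finset.mem_univ i, hi ▸ (Finset.mem_Icc.mp hn).2⟩, hi⟩)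
      simp [Function.extend_apply' _ _ _ hout]
  rw [← Finset.prod_subset hsub hone, Finset.prod_image fun i _ j _ h => hinj h,
    Finset.prod_filter]
  simp [hinj.extend_apply]

section Signs

variable {ι : Type*} [Fintype ι] {u v : ι → ℝ}

theorem abs_prod_ite_one_add_mul_le (p : ι → Prop) [DecidablePred p]
    (hu : ∀ i, u i = 1 ∨ u i = -1) (hv : ∀ i, v i = 1 ∨ v i = -1) :
    |∏ i, if p i then 1 + u i * v i else 1| ≤ 2 ^ Fintype.card ι := by
  rw [Finset.abs_prod, ← Finset.card_univ, ← Finset.prod_const]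
  refine Finset.prod_le_prod (fun _ _ => abs_nonneg _) fun i _ => ?_
  split_ifs
  · rcases hu i with h | h <;> rcases hv i with h' | h' <;> norm_num [h, h']
  · norm_num

theorem prod_one_add_mul_eq_ite (hu : ∀ i, u i = 1 ∨ u i = -1) (hv : ∀ i, v i = 1 ∨ v i = -1) :
    ∏ i, (1 + u i * v i) = if ∀ i, u i = v i then 2 ^ Fintype.card ι else 0 := by
  classical
  have hfactor : ∀ i, 1 + u i * v i = if u i = v i then 2 else 0 := fun i => by
    rcases hu i with h | h <;> rcases hv i with h' | h' <;> norm_num [h, h']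
  simp [hfactor, Fintype.prod_ite_zero]

end Signs

theorem abs_extend_le_one {ι : Type*} {f : ι → ℕ} {g : ι → ℝ} (hg : ∀ i, |g i| ≤ 1) (n : ℕ) :
    |Function.extend f g 0 n| ≤ 1 := by
  classical
  by_cases h : ∃ i, f i = n
  · rw [Function.extend_def, dif_pos h]
    exact hg _
  · simp [Function.extend_apply' _ _ _ h]

section Targets

variable {ι κ : Type*} [Fintype ι] [Fintype κ] {nn : ι → ℕ} {mm : κ → ℕ} {x : ι → ℝ} {y : κ → ℝ}
  {ξ η : ℕ → Ω → ℝ}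

theorem densityProc_extend_eq (hnn : ∀ i, 1 ≤ nn i) (hmm : ∀ j, 1 ≤ mm j)
    (hinjn : Function.Injective nn) (hinjm : Function.Injective mm) (N : ℕ) (ω : Ω) :
    densityProc ξ η (Function.extend nn x 0) (Function.extend mm y 0) N ω =
      (∏ i, if nn i ≤ Tproc ξ η N ω then 1 + ξ (alphaProc ξ η (nn i) ω).toNat ω * x i else 1) *
      ∏ j, if mm j ≤ Sproc ξ η N ω then 1 + ξ (betaProc ξ η (mm j) ω).toNat ω * y j else 1 := by
  rw [densityProc_eq_prod_firstHit, prod_Icc_extend hnn hinjn, prod_Icc_extend hmm hinjm]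

theorem abs_densityProc_extend_le (hnn : ∀ i, 1 ≤ nn i) (hmm : ∀ j, 1 ≤ mm j)
    (hinjn : Function.Injective nn) (hinjm : Function.Injective mm)
    (hx : ∀ i, x i = 1 ∨ x i = -1) (hy : ∀ j, y j = 1 ∨ y j = -1)
    (hξv : ∀ n ω, ξ n ω = 1 ∨ ξ n ω = -1) (N : ℕ) (ω : Ω) :
    |densityProc ξ η (Function.extend nn x 0) (Function.extend mm y 0) N ω| ≤
      2 ^ (Fintype.card ι + Fintype.card κ) := by
  rw [densityProc_extend_eq hnn hmm hinjn hinjm, abs_mul, pow_add]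
  exact mul_le_mul (abs_prod_ite_one_add_mul_le _ (fun i => hξv _ ω) hx)
    (abs_prod_ite_one_add_mul_le _ (fun j => hξv _ ω) hy) (abs_nonneg _) (by positivity)

theorem tendsto_densityProc_extend (hnn : ∀ i, 1 ≤ nn i) (hmm : ∀ j, 1 ≤ mm j)
    (hinjn : Function.Injective nn) (hinjm : Function.Injective mm)
    (hx : ∀ i, x i = 1 ∨ x i = -1) (hy : ∀ j, y j = 1 ∨ y j = -1)
    (hξv : ∀ n ω, ξ n ω = 1 ∨ ξ n ω = -1) {ω : Ω}
    (hT : Tendsto (fun N => Tproc ξ η N ω) atTop atTop)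
    (hS : Tendsto (fun N => Sproc ξ η N ω) atTop atTop) :
    Tendsto (fun N => densityProc ξ η (Function.extend nn x 0) (Function.extend mm y 0) N ω)
      atTop (nhds (({ω | ∀ i, ξ (alphaProc ξ η (nn i) ω).toNat ω = x i} ∩
        {ω | ∀ j, ξ (betaProc ξ η (mm j) ω).toNat ω = y j}).indicator
          (fun _ => 2 ^ (Fintype.card ι + Fintype.card κ)) ω)) := by
  refine tendsto_const_nhds.congr' ?_
  filter_upwards [eventually_all.2 fun i => hT.eventually_ge_atTop (nn i),
    eventually_all.2 fun j => hS.eventually_ge_atTop (mm j)] with N hTN hSN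
  simp only [densityProc_extend_eq hnn hmm hinjn hinjm, hTN, hSN, if_true,
    prod_one_add_mul_eq_ite (fun i => hξv _ ω) hx, prod_one_add_mul_eq_ite (fun j => hξv _ ω) hy,
    ite_zero_mul_ite_zero, pow_add]
  simp [indicator_apply]

variable {mΩ : MeasurableSpace Ω} {P : Measure Ω} [IsProbabilityMeasure P] {F : Filtration ℕ mΩ}

theorem measure_signs_eq (hξ : ∀ n, 1 ≤ n → Measurable[F n] (ξ n))
    (hη : ∀ n, 1 ≤ n → Measurable[F n] (η n)) (hξv : ∀ n ω, ξ n ω = 1 ∨ ξ n ω = -1)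
    (hηv : ∀ n ω, η n ω = 1 ∨ η n ω = -1) (hξ0 : ∀ n, P[ξ (n + 1) | F n] =ᵐ[P] 0)
    (hη0 : ∀ n, P[η (n + 1) | F n] =ᵐ[P] 0)
    (hT : ∀ᵐ ω ∂P, Tendsto (fun N => Tproc ξ η N ω) atTop atTop)
    (hS : ∀ᵐ ω ∂P, Tendsto (fun N => Sproc ξ η N ω) atTop atTop)
    (hnn : ∀ i, 1 ≤ nn i) (hmm : ∀ j, 1 ≤ mm j) (hinjn : Function.Injective nn)
    (hinjm : Function.Injective mm) (hx : ∀ i, x i = 1 ∨ x i = -1)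
    (hy : ∀ j, y j = 1 ∨ y j = -1) :
    P ({ω | ∀ i, ξ (alphaProc ξ η (nn i) ω).toNat ω = x i} ∩
        {ω | ∀ j, ξ (betaProc ξ η (mm j) ω).toNat ω = y j}) =
      2⁻¹ ^ (Fintype.card ι + Fintype.card κ) := by
  set E := {ω | ∀ i, ξ (alphaProc ξ η (nn i) ω).toNat ω = x i} ∩
    {ω | ∀ j, ξ (betaProc ξ η (mm j) ω).toNat ω = y j}
  set c : ℝ := 2 ^ (Fintype.card ι + Fintype.card κ)
  set Z := densityProc ξ η (Function.extend nn x 0) (Function.extend mm y 0)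
  have hZ_meas : ∀ N, AEStronglyMeasurable (Z N) P := fun N =>
    ((measurable_densityProc hξ hη N).mono (F.le N) le_rfl).aestronglyMeasurable
  have hZ_lim : ∀ᵐ ω ∂P, Tendsto (fun N => Z N ω) atTop (nhds (E.indicator (fun _ => c) ω)) := by
    filter_upwards [hT, hS] with ω hTω hSω
    exact tendsto_densityProc_extend hnn hmm hinjn hinjm hx hy hξv hTω hSω
  have habs : ∀ z : ℝ, z = 1 ∨ z = -1 → |z| ≤ 1 := fun z hz => by
    rcases hz with h | h <;> simp [h]
  have h_int : ∫ ω, E.indicator (fun _ => c) ω ∂P = 1 := by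
    refine tendsto_nhds_unique (tendsto_integral_of_dominated_convergence (fun _ => c) hZ_meas
      (integrable_const c) (fun N => ae_of_all _ (abs_densityProc_extend_le hnn hmm hinjn hinjm
        hx hy hξv N)) hZ_lim) ?_
    simp only [Z, integral_densityProc hξ hη hξv hηv hξ0 hη0
      (abs_extend_le_one fun i => habs _ (hx i)) (abs_extend_le_one fun j => habs _ (hy j)),
      tendsto_const_nhds]
  have : NeZero c := ⟨by positivity⟩
  have hE : NullMeasurableSet E P := (aemeasurable_indicator_const_iff c).1
    (aestronglyMeasurable_of_tendsto_ae atTop hZ_meas hZ_lim).aemeasurable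
  rw [integral_indicator₀ hE, setIntegral_const, smul_eq_mul, measureReal_def] at h_int
  rw [← ENNReal.ofReal_toReal (measure_ne_top P E), eq_inv_of_mul_eq_one_left h_int, ← inv_pow]
  simp [ENNReal.ofReal_inv_of_pos, ENNReal.ofReal_pow, ENNReal.inv_pow]

end Targets

theorem stmt_9_general
    {Ω : Type*} [mΩ : MeasurableSpace Ω] (P : Measure Ω) [IsProbabilityMeasure P]
    (F : MeasureTheory.Filtration ℕ mΩ)
    (ξ η : ℕ → Ω → ℝ)
    (hξm : ∀ n, 1 ≤ n → Measurable[F n] (ξ n))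
    (hηm : ∀ n, 1 ≤ n → Measurable[F n] (η n))
    (hξv : ∀ n ω, ξ n ω = 1 ∨ ξ n ω = -1)
    (hηv : ∀ n ω, η n ω = 1 ∨ η n ω = -1)
    (hhalf : ∀ n, 1 ≤ n →
      (P[({ω | ξ n ω = 1}).indicator (fun _ => (1 : ℝ)) | F (n - 1)] =ᵐ[P] fun _ => 1 / 2) ∧
      (P[({ω | ξ n ω = -1}).indicator (fun _ => (1 : ℝ)) | F (n - 1)] =ᵐ[P] fun _ => 1 / 2) ∧
      (P[({ω | η n ω = 1}).indicator (fun _ => (1 : ℝ)) | F (n - 1)] =ᵐ[P] fun _ => 1 / 2) ∧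
      (P[({ω | η n ω = -1}).indicator (fun _ => (1 : ℝ)) | F (n - 1)] =ᵐ[P] fun _ => 1 / 2))
    (ζ ψ : ℕ → Ω → ℝ)
    (hT : P {ω | Tendsto (fun i => Tproc ξ η i ω) atTop atTop} = 1)
    (hS : P {ω | Tendsto (fun i => Sproc ξ η i ω) atTop atTop} = 1) :
    (∀ n : ℕ, 1 ≤ n →
      (∀ᵐ ω ∂P, alphaProc ξ η n ω ≠ ⊤) ∧ (∀ᵐ ω ∂P, betaProc ξ η n ω ≠ ⊤) ∧
      (xiAlpha ξ η ζ n =ᵐ[P] fun ω => ξ (alphaProc ξ η n ω).toNat ω) ∧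
      (xiBeta ξ η ψ n =ᵐ[P] fun ω => ξ (betaProc ξ η n ω).toNat ω)) ∧
    (∀ (k l : ℕ) (nn : Fin k → ℕ) (mm : Fin l → ℕ),
      (∀ i, 1 ≤ nn i) → (∀ j, 1 ≤ mm j) →
      Function.Injective nn → Function.Injective mm →
      ∀ (x : Fin k → ℝ) (y : Fin l → ℝ),
        (∀ i, x i = 1 ∨ x i = -1) → (∀ j, y j = 1 ∨ y j = -1) →
        P ({ω | ∀ i, ξ (alphaProc ξ η (nn i) ω).toNat ω = x i}
            ∩ {ω | ∀ j, ξ (betaProc ξ η (mm j) ω).toNat ω = y j})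
          = 2⁻¹ ^ (k + l)) := by
  have hTae := ae_tendsto_of_measure_eq_one
    (fun N => (measurable_Tproc hξm hηm N).mono (F.le N) le_rfl) hT
  have hSae := ae_tendsto_of_measure_eq_one
    (fun N => (measurable_Sproc hξm hηm N).mono (F.le N) le_rfl) hS
  have hξ0 : ∀ n, P[ξ (n + 1) | F n] =ᵐ[P] 0 := fun n => by
    obtain ⟨h1, h2, -, -⟩ := hhalf (n + 1) n.succ_pos
    exact condExp_eq_zero_of_indicator_half ((hξm _ n.succ_pos).mono (F.le _) le_rfl) (hξv _) h1 h2
  have hη0 : ∀ n, P[η (n + 1) | F n] =ᵐ[P] 0 := fun n => by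
    obtain ⟨-, -, h1, h2⟩ := hhalf (n + 1) n.succ_pos
    exact condExp_eq_zero_of_indicator_half ((hηm _ n.succ_pos).mono (F.le _) le_rfl) (hηv _) h1 h2
  refine ⟨fun n hn => ?_, fun k l nn mm hnn hmm hinjn hinjm x y hx hy => ?_⟩
  · have hA : ∀ᵐ ω ∂P, alphaProc ξ η n ω ≠ ⊤ := hTae.mono fun ω hω => alphaProc_ne_top hω hn
    have hB : ∀ᵐ ω ∂P, betaProc ξ η n ω ≠ ⊤ := hSae.mono fun ω hω => betaProc_ne_top hω hn
    exact ⟨hA, hB, hA.mono fun ω hω => if_neg hω, hB.mono fun ω hω => if_neg hω⟩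
  · simpa using measure_signs_eq hξm hηm hξv hηv hξ0 hη0 hTae hSae hnn hmm hinjn hinjm hx hy

theorem stmt_9
    {Ω : Type*} [mΩ : MeasurableSpace Ω] (P : Measure Ω) [IsProbabilityMeasure P]
    (F : MeasureTheory.Filtration ℕ mΩ) (hF0 : F 0 = ⊥)
    (ξ η : ℕ → Ω → ℝ)
    (hξm : ∀ n, 1 ≤ n → Measurable[F n] (ξ n))
    (hηm : ∀ n, 1 ≤ n → Measurable[F n] (η n))
    (hξv : ∀ n ω, ξ n ω = 1 ∨ ξ n ω = -1)
    (hηv : ∀ n ω, η n ω = 1 ∨ η n ω = -1)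
    (hhalf : ∀ n, 1 ≤ n →
      (P[({ω | ξ n ω = 1}).indicator (fun _ => (1 : ℝ)) | F (n - 1)] =ᵐ[P] fun _ => 1 / 2) ∧
      (P[({ω | ξ n ω = -1}).indicator (fun _ => (1 : ℝ)) | F (n - 1)] =ᵐ[P] fun _ => 1 / 2) ∧
      (P[({ω | η n ω = 1}).indicator (fun _ => (1 : ℝ)) | F (n - 1)] =ᵐ[P] fun _ => 1 / 2) ∧
      (P[({ω | η n ω = -1}).indicator (fun _ => (1 : ℝ)) | F (n - 1)] =ᵐ[P] fun _ => 1 / 2))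
    (ζ ψ : ℕ → Ω → ℝ)
    (hζm : ∀ n, Measurable (ζ n)) (hψm : ∀ n, Measurable (ψ n))
    (hζd : ∀ n, P {ω | ζ n ω = 1} = 2⁻¹ ∧ P {ω | ζ n ω = -1} = 2⁻¹)
    (hψd : ∀ n, P {ω | ψ n ω = 1} = 2⁻¹ ∧ P {ω | ψ n ω = -1} = 2⁻¹)
    (hindep : iIndep (fun i : ℕ ⊕ ℕ ⊕ Unit =>
      Sum.elim (fun n => MeasurableSpace.comap (ζ n) inferInstance)
        (Sum.elim (fun n => MeasurableSpace.comap (ψ n) inferInstance)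
          (fun _ => ⨆ n, (F n : MeasurableSpace Ω))) i) P)
    (hT : P {ω | Tendsto (fun i => Tproc ξ η i ω) atTop atTop} = 1)
    (hS : P {ω | Tendsto (fun i => Sproc ξ η i ω) atTop atTop} = 1) :
    (∀ n : ℕ, 1 ≤ n →
      (∀ᵐ ω ∂P, alphaProc ξ η n ω ≠ ⊤) ∧ (∀ᵐ ω ∂P, betaProc ξ η n ω ≠ ⊤) ∧
      (xiAlpha ξ η ζ n =ᵐ[P] fun ω => ξ (alphaProc ξ η n ω).toNat ω) ∧
      (xiBeta ξ η ψ n =ᵐ[P] fun ω => ξ (betaProc ξ η n ω).toNat ω)) ∧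
    (∀ (k l : ℕ) (nn : Fin k → ℕ) (mm : Fin l → ℕ),
      (∀ i, 1 ≤ nn i) → (∀ j, 1 ≤ mm j) →
      Function.Injective nn → Function.Injective mm →
      ∀ (x : Fin k → ℝ) (y : Fin l → ℝ),
        (∀ i, x i = 1 ∨ x i = -1) → (∀ j, y j = 1 ∨ y j = -1) →
        P ({ω | ∀ i, ξ (alphaProc ξ η (nn i) ω).toNat ω = x i}
            ∩ {ω | ∀ j, ξ (betaProc ξ η (mm j) ω).toNat ω = y j})
          = 2⁻¹ ^ (k + l)) :=
  stmt_9_general (mΩ := mΩ) P F ξ η hξm hηm hξv hηv hhalf ζ ψ hT hS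
end
end

section
/- In the biased setting with P(ξ_n = 1 | F_{n−1}) = P(η_n = 1 | F_{n−1}) = p almost surely for a constant 0 < p < 1, for every n ≥ 1: P(ξ_{α_n} = 1, α_n < ∞) = (1/2)·P(α_n < ∞) − ((1 − 2p)/2)·∑_{i ≥ n−1} P(T_i = n − 1). -/
open MeasureTheory ProbabilityTheory Filter Set

noncomputable section

variable {Ω : Type*}

/-!
With `A = {T_j = n - 1} ∈ F_j`, the event `{α_n = j + 1}` is `A ∩ {ξ_{j+1} = η_{j+1}}`, the
disjoint union of `A ∩ {ξ_{j+1} = η_{j+1} = 1}` and `A ∩ {ξ_{j+1} = η_{j+1} = -1}`. By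
inclusion–exclusion the second piece has probability
`P(A) - P(A, ξ_{j+1} = 1) - P(A, η_{j+1} = 1) + P(A, ξ_{j+1} = η_{j+1} = 1)`, and the two middle
terms are both `p P(A)` by the conditional law given `F_j`. Hence
`P(α_n = j + 1, ξ_{j+1} = 1) = P(α_n = j + 1) / 2 - (1 - 2p) P(T_j = n - 1) / 2`, whatever the
joint law of `ξ_{j+1}` and `η_{j+1}`, and summing over `j` gives the formula.
-/

lemma ENat.iInf_natCast_eq_natCast_iff {q : ℕ → Prop} {m : ℕ} :
    ⨅ (k : ℕ) (_ : q k), (k : ℕ∞) = m ↔ q m ∧ ∀ k < m, ¬ q k := by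
  classical
  constructor
  · intro h
    have hex : ∃ k, q k := by
      by_contra! hne
      simp [hne] at h
    have hfind : ⨅ (k : ℕ) (_ : q k), (k : ℕ∞) = Nat.find hex :=
      le_antisymm (iInf₂_le _ (Nat.find_spec hex))
        (le_iInf₂ fun k hk => by exact_mod_cast Nat.find_min' hex hk)
    obtain rfl : Nat.find hex = m := by exact_mod_cast hfind.symm.trans h
    exact ⟨Nat.find_spec hex, fun k hk => Nat.find_min hex hk⟩
  · rintro ⟨hm, hmin⟩
    exact le_antisymm (iInf₂_le m hm)
      (le_iInf₂ fun k hk => by exact_mod_cast not_lt.1 fun hlt => hmin k hlt hk)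

section Walk

variable (ξ η : ℕ → Ω → ℝ) {n : ℕ}

lemma Tproc_zero (ω : Ω) : Tproc ξ η 0 ω = 0 := by
  simp [Tproc]

lemma Tproc_succ_s17 (j : ℕ) (ω : Ω) :
    Tproc ξ η (j + 1) ω = Tproc ξ η j ω + Qproc ξ η (j + 1) ω := by
  simp [Tproc, Finset.sum_Icc_succ_top (Nat.le_add_left 1 j)]

lemma Qproc_le_one (k : ℕ) (ω : Ω) : Qproc ξ η k ω ≤ 1 := by
  unfold Qproc; split <;> omega

lemma Tproc_le_self (j : ℕ) (ω : Ω) : Tproc ξ η j ω ≤ j := by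
  induction j with
  | zero => simp [Tproc_zero]
  | succ j ih => have := Qproc_le_one ξ η (j + 1) ω; rw [Tproc_succ_s17]; omega

lemma Tproc_mono (ω : Ω) : Monotone fun j => Tproc ξ η j ω := fun _ _ h =>
  Finset.sum_le_sum_of_subset (Finset.Icc_subset_Icc_right h)

lemma alphaProc_eq_natCast_iff (ω : Ω) (m : ℕ) :
    alphaProc ξ η n ω = m ↔
      (1 ≤ m ∧ Tproc ξ η m ω = n) ∧ ∀ k < m, ¬ (1 ≤ k ∧ Tproc ξ η k ω = n) :=
  ENat.iInf_natCast_eq_natCast_iff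

lemma alphaProc_eq_succ_iff (ω : Ω) (hn : 1 ≤ n) (j : ℕ) :
    alphaProc ξ η n ω = ↑(j + 1) ↔ Tproc ξ η j ω = n - 1 ∧ ξ (j + 1) ω = η (j + 1) ω := by
  have hT := Tproc_succ_s17 ξ η j ω
  have hT0 := Tproc_zero ξ η ω
  rw [alphaProc_eq_natCast_iff]
  unfold Qproc at hT
  split_ifs at hT with hQ
  · constructor
    · rintro ⟨⟨-, hTn⟩, hmin⟩
      refine ⟨?_, hQ⟩
      rcases Nat.eq_zero_or_pos j with rfl | hj
      · omega
      · have := hmin j (Nat.lt_succ_self j); omega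
    · rintro ⟨hTj, -⟩
      refine ⟨⟨Nat.le_add_left 1 j, by omega⟩, fun k hk ⟨_, hTk⟩ => ?_⟩
      have : Tproc ξ η k ω ≤ Tproc ξ η j ω := Tproc_mono ξ η ω (Nat.lt_succ_iff.1 hk)
      omega
  · simp only [hQ, and_false, iff_false, not_and, not_forall, not_not]
    rintro ⟨-, hTn⟩
    refine ⟨j, Nat.lt_succ_self j, ?_, by omega⟩
    rcases Nat.eq_zero_or_pos j with rfl | hj
    · omega
    · exact hj

lemma exists_alphaProc_eq_succ (ω : Ω) (h : alphaProc ξ η n ω ≠ ⊤) :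
    ∃ j : ℕ, alphaProc ξ η n ω = ↑(j + 1) := by
  obtain ⟨m, hm⟩ := ENat.ne_top_iff_exists.1 h
  obtain ⟨⟨hm1, -⟩, -⟩ := (alphaProc_eq_natCast_iff ξ η ω m).1 hm.symm
  exact ⟨m - 1, by rw [← hm, Nat.sub_add_cancel hm1]⟩

lemma pairwise_disjoint_setOf_alphaProc_eq_succ :
    Pairwise (Function.onFun Disjoint fun j : ℕ => {ω | alphaProc ξ η n ω = ↑(j + 1)}) :=
  fun i j hij => Set.disjoint_left.2 fun _ hi hj => hij (by simpa using hi.symm.trans hj)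

lemma setOf_alphaProc_ne_top_eq_iUnion :
    {ω | alphaProc ξ η n ω ≠ ⊤} = ⋃ j : ℕ, {ω | alphaProc ξ η n ω = ↑(j + 1)} := by
  ext ω
  simp only [mem_ofPred_eq, mem_iUnion]
  refine ⟨exists_alphaProc_eq_succ ξ η ω, fun ⟨j, hj⟩ => ?_⟩
  rw [hj]
  exact ENat.natCast_ne_top _

lemma setOf_alphaProc_ne_top_and_eq_one_eq_iUnion :
    {ω | alphaProc ξ η n ω ≠ ⊤ ∧ ξ (alphaProc ξ η n ω).toNat ω = 1} =
      ⋃ j : ℕ, {ω | alphaProc ξ η n ω = ↑(j + 1)} ∩ {ω | ξ (j + 1) ω = 1} := by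
  ext ω
  simp only [mem_ofPred_eq, mem_iUnion, mem_inter_iff]
  constructor
  · rintro ⟨hne, hξ⟩
    obtain ⟨j, hj⟩ := exists_alphaProc_eq_succ ξ η ω hne
    rw [hj, ENat.toNat_natCast] at hξ
    exact ⟨j, hj, hξ⟩
  · rintro ⟨j, hj, hξ⟩
    rw [hj, ENat.toNat_natCast]
    exact ⟨ENat.natCast_ne_top _, hξ⟩

lemma setOf_Tproc_eq_eq_empty {i : ℕ} (h : i < n) : {ω | Tproc ξ η i ω = n} = ∅ :=
  eq_empty_of_forall_notMem fun ω hω => (Tproc_le_self ξ η i ω).not_gt (hω ▸ h)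

lemma tsum_measureReal_Tproc_eq {mΩ : MeasurableSpace Ω} (μ : Measure Ω) :
    ∑' i : {i : ℕ // n ≤ i}, μ.real {ω | Tproc ξ η i ω = n} =
      ∑' i : ℕ, μ.real {ω | Tproc ξ η i ω = n} := by
  refine tsum_subtype_eq_of_support_subset (f := fun i => μ.real {ω | Tproc ξ η i ω = n})
    (s := {i | n ≤ i}) (Function.support_subset_iff'.2 fun i hi => ?_)
  rw [setOf_Tproc_eq_eq_empty ξ η (not_le.1 hi), measureReal_empty]

end Walk

lemma measurable_Tproc_s17 {mΩ : MeasurableSpace Ω} (F : Filtration ℕ mΩ) {ξ η : ℕ → Ω → ℝ}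
    (hξm : ∀ n, 1 ≤ n → Measurable[F n] (ξ n)) (hηm : ∀ n, 1 ≤ n → Measurable[F n] (η n))
    (j : ℕ) : Measurable[F j] (Tproc ξ η j) := by
  refine Finset.measurable_sum _ fun k hk => ?_
  obtain ⟨hk1, hkj⟩ := Finset.mem_Icc.1 hk
  have hQ : Measurable[F k] (Qproc ξ η k) :=
    Measurable.ite (measurableSet_eq_fun (hξm k hk1) (hηm k hk1)) measurable_const
      measurable_const
  exact hQ.mono (F.mono hkj) le_rfl

section Measure

variable {m m₀ : MeasurableSpace Ω} {μ : Measure Ω} [IsFiniteMeasure μ]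

lemma hasSum_measureReal_iUnion {ι : Type*} [Countable ι] {E : ι → Set Ω}
    (hE : ∀ i, MeasurableSet (E i)) (hd : Pairwise (Function.onFun Disjoint E)) :
    HasSum (fun i => μ.real (E i)) (μ.real (⋃ i, E i)) := by
  have hsum := measure_iUnion (μ := μ) hd hE
  rw [measureReal_def, hsum, ENNReal.tsum_toReal_eq fun i => measure_ne_top μ (E i)]
  exact (ENNReal.summable_toReal (hsum ▸ measure_ne_top μ _)).hasSum

lemma measureReal_sdiff_sdiff {A S U : Set Ω} (hS : MeasurableSet S) (hU : MeasurableSet U) :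
    μ.real ((A \ S) \ U) =
      μ.real A - μ.real (A ∩ S) - μ.real (A ∩ U) + μ.real (A ∩ S ∩ U) := by
  have hAS := measureReal_inter_add_sdiff (μ := μ) (s := A) hS
  have hASU := measureReal_inter_add_sdiff (μ := μ) (s := A \ S) hU
  have hAUS := measureReal_inter_add_sdiff (μ := μ) (s := A ∩ U) hS
  rw [inter_right_comm, inter_sdiff_right_comm] at hAUS
  linarith

lemma measureReal_inter_of_condExp_indicator_eq_const (hm : m ≤ m₀) {A S : Set Ω}
    (hA : MeasurableSet[m] A) (hS : MeasurableSet[m₀] S) {p : ℝ}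
    (h : μ[S.indicator (fun _ => (1 : ℝ)) | m] =ᵐ[μ] fun _ => p) :
    μ.real (A ∩ S) = p * μ.real A :=
  calc μ.real (A ∩ S) = ∫ ω in A, S.indicator (fun _ => (1 : ℝ)) ω ∂μ := by
        rw [setIntegral_indicator hS, setIntegral_const, smul_eq_mul, mul_one]
    _ = ∫ ω in A, μ[S.indicator (fun _ => (1 : ℝ)) | m] ω ∂μ :=
        (setIntegral_condExp hm ((integrable_const 1).indicator hS) hA).symm
    _ = ∫ _ in A, p ∂μ := integral_congr_ae (ae_restrict_of_ae h)
    _ = p * μ.real A := by rw [setIntegral_const, smul_eq_mul, mul_comm]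

lemma measureReal_inter_agree_inter_eq_one (hm : m ≤ m₀) {A : Set Ω} (hA : MeasurableSet[m] A)
    {x y : Ω → ℝ} (hx : Measurable[m₀] x) (hy : Measurable[m₀] y)
    (hxv : ∀ ω, x ω = 1 ∨ x ω = -1) (hyv : ∀ ω, y ω = 1 ∨ y ω = -1) {p : ℝ}
    (hpx : μ[{ω | x ω = 1}.indicator (fun _ => (1 : ℝ)) | m] =ᵐ[μ] fun _ => p)
    (hpy : μ[{ω | y ω = 1}.indicator (fun _ => (1 : ℝ)) | m] =ᵐ[μ] fun _ => p) :
    μ.real (A ∩ {ω | x ω = y ω} ∩ {ω | x ω = 1}) =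
      1 / 2 * μ.real (A ∩ {ω | x ω = y ω}) - (1 - 2 * p) / 2 * μ.real A := by
  set S := {ω | x ω = 1}
  set U := {ω | y ω = 1}
  have hS : MeasurableSet S := hx (measurableSet_singleton 1)
  have hU : MeasurableSet U := hy (measurableSet_singleton 1)
  have hagree : A ∩ {ω | x ω = y ω} = A ∩ S ∩ U ∪ (A \ S) \ U := by
    ext ω
    rcases hxv ω with h₁ | h₁ <;> rcases hyv ω with h₂ | h₂ <;> norm_num [S, U, h₁, h₂]
  have hone : A ∩ {ω | x ω = y ω} ∩ S = A ∩ S ∩ U := by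
    ext ω
    rcases hxv ω with h₁ | h₁ <;> rcases hyv ω with h₂ | h₂ <;> norm_num [S, U, h₁, h₂]
  have hdisj : Disjoint (A ∩ S ∩ U) ((A \ S) \ U) :=
    Set.disjoint_left.2 fun _ h₁ h₂ => h₂.1.2 h₁.1.2
  rw [hone, hagree, measureReal_union hdisj (((hm _ hA).diff hS).diff hU),
    measureReal_sdiff_sdiff hS hU, measureReal_inter_of_condExp_indicator_eq_const hm hA hS hpx,
    measureReal_inter_of_condExp_indicator_eq_const hm hA hU hpy]
  ring

end Measure

/-- This also covers `k = 0` with `b` not summable (the case `p = 1 / 2`), where `∑' b` is a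
junk value. -/
lemma eq_sub_mul_tsum_of_hasSum {ι : Type*} {a b c : ι → ℝ} {A C r k : ℝ} (ha : HasSum a A)
    (hc : HasSum c C) (h : ∀ i, c i = r * a i - k * b i) : C = r * A - k * ∑' i, b i := by
  have hkb : (fun i => k * b i) = fun i => r * a i - c i := funext fun i => by rw [h]; ring
  rw [← tsum_mul_left, hkb, ((ha.mul_left r).sub hc).tsum_eq]
  ring

theorem stmt_17_general
    {Ω : Type*} [mΩ : MeasurableSpace Ω] (P : Measure Ω) [IsProbabilityMeasure P]
    (F : MeasureTheory.Filtration ℕ mΩ)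
    (ξ η : ℕ → Ω → ℝ) (p : ℝ)
    (hξm : ∀ n, 1 ≤ n → Measurable[F n] (ξ n))
    (hηm : ∀ n, 1 ≤ n → Measurable[F n] (η n))
    (hξv : ∀ n ω, ξ n ω = 1 ∨ ξ n ω = -1)
    (hηv : ∀ n ω, η n ω = 1 ∨ η n ω = -1)
    (hp : ∀ n, 1 ≤ n →
      (P[({ω | ξ n ω = 1}).indicator (fun _ => (1 : ℝ)) | F (n - 1)] =ᵐ[P] fun _ => p) ∧
      (P[({ω | η n ω = 1}).indicator (fun _ => (1 : ℝ)) | F (n - 1)] =ᵐ[P] fun _ => p)) :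
    ∀ n : ℕ, 1 ≤ n →
      (P {ω | alphaProc ξ η n ω ≠ ⊤ ∧ ξ (alphaProc ξ η n ω).toNat ω = 1}).toReal
        = 1 / 2 * (P {ω | alphaProc ξ η n ω ≠ ⊤}).toReal
          - (1 - 2 * p) / 2 *
            ∑' i : {i : ℕ // n - 1 ≤ i}, (P {ω | Tproc ξ η (i : ℕ) ω = n - 1}).toReal := by
  intro n hn
  set E : ℕ → Set Ω := fun j => {ω | alphaProc ξ η n ω = ↑(j + 1)}
  have hE : ∀ j, E j = {ω | Tproc ξ η j ω = n - 1} ∩ {ω | ξ (j + 1) ω = η (j + 1) ω} :=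
    fun j => ext fun ω => alphaProc_eq_succ_iff ξ η ω hn j
  have hTm : ∀ j, MeasurableSet[F j] {ω | Tproc ξ η j ω = n - 1} :=
    fun j => measurable_Tproc_s17 F hξm hηm j (measurableSet_singleton _)
  have hξm' : ∀ j, Measurable (ξ (j + 1)) := fun j => (hξm _ j.succ_pos).mono (F.le _) le_rfl
  have hηm' : ∀ j, Measurable (η (j + 1)) := fun j => (hηm _ j.succ_pos).mono (F.le _) le_rfl
  have hEm : ∀ j, MeasurableSet (E j) := fun j => hE j ▸
    (F.le j _ (hTm j)).inter (measurableSet_eq_fun (hξm' j) (hηm' j))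
  have hd := pairwise_disjoint_setOf_alphaProc_eq_succ ξ η (n := n)
  have hA : HasSum (fun j => P.real (E j)) (P.real {ω | alphaProc ξ η n ω ≠ ⊤}) := by
    rw [setOf_alphaProc_ne_top_eq_iUnion]
    exact hasSum_measureReal_iUnion hEm hd
  have hC : HasSum (fun j => P.real (E j ∩ {ω | ξ (j + 1) ω = 1}))
      (P.real {ω | alphaProc ξ η n ω ≠ ⊤ ∧ ξ (alphaProc ξ η n ω).toNat ω = 1}) := by
    rw [setOf_alphaProc_ne_top_and_eq_one_eq_iUnion]
    exact hasSum_measureReal_iUnion (fun j => (hEm j).inter (hξm' j (measurableSet_singleton 1)))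
      fun i j hij => (hd hij).mono inter_subset_left inter_subset_left
  simp only [← measureReal_def, tsum_measureReal_Tproc_eq]
  refine eq_sub_mul_tsum_of_hasSum hA hC fun j => ?_
  obtain ⟨hpξ, hpη⟩ := hp (j + 1) j.succ_pos
  rw [hE j]
  exact measureReal_inter_agree_inter_eq_one (F.le j) (hTm j) (hξm' j) (hηm' j) (hξv _) (hηv _)
    hpξ hpη

theorem stmt_17
    {Ω : Type*} [mΩ : MeasurableSpace Ω] (P : Measure Ω) [IsProbabilityMeasure P]
    (F : MeasureTheory.Filtration ℕ mΩ) (hF0 : F 0 = ⊥)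
    (ξ η : ℕ → Ω → ℝ) (p : ℝ) (hp0 : 0 < p) (hp1 : p < 1)
    (hξm : ∀ n, 1 ≤ n → Measurable[F n] (ξ n))
    (hηm : ∀ n, 1 ≤ n → Measurable[F n] (η n))
    (hξv : ∀ n ω, ξ n ω = 1 ∨ ξ n ω = -1)
    (hηv : ∀ n ω, η n ω = 1 ∨ η n ω = -1)
    (hp : ∀ n, 1 ≤ n →
      (P[({ω | ξ n ω = 1}).indicator (fun _ => (1 : ℝ)) | F (n - 1)] =ᵐ[P] fun _ => p) ∧
      (P[({ω | η n ω = 1}).indicator (fun _ => (1 : ℝ)) | F (n - 1)] =ᵐ[P] fun _ => p)) :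
    ∀ n : ℕ, 1 ≤ n →
      (P {ω | alphaProc ξ η n ω ≠ ⊤ ∧ ξ (alphaProc ξ η n ω).toNat ω = 1}).toReal
        = 1 / 2 * (P {ω | alphaProc ξ η n ω ≠ ⊤}).toReal
          - (1 - 2 * p) / 2 *
            ∑' i : {i : ℕ // n - 1 ≤ i}, (P {ω | Tproc ξ η (i : ℕ) ω = n - 1}).toReal :=
  stmt_17_general (mΩ := mΩ) P F ξ η p hξm hηm hξv hηv hp
end
end
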